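/- Let q = 2^h (h ≥ 1), K = GF(q) ⊆ F = GF(q²), and a,b,c ∈ F with c ≠ 0. If the quadratic form f in the four variables x₀,x₁,y₀,y₁ over K (defined below from a,b,c) can be written as a product ℓ₁·ℓ₂ of two linear forms with coefficients in an algebraic closure of K, then Tr(ab/c²) = 0, where Tr : F → GF(2) is the absolute trace. -/

import Mathlib

/-!
In characteristic two the polar form of a product `ℓ₁ ℓ₂` of linear forms is
`ℓ₁ ⊗ ℓ₂ + ℓ₂ ⊗ ℓ₁`. It has rank at most two, so its Pfaffian vanishes, and `ℓ₁ ℓ₂` vanishes on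
its radical as soon as it is nonzero. For `f` the Pfaffian is `1 + N(c)`, so `N(c) = 1`; the
radical is then spanned by two explicit vectors, and `f` vanishing on them says `b = ā c²`,
where `ā = a^q`. Hence `ab/c² = a ā = N(a)` lies in `GF(q)`, and the absolute trace of an element
of `GF(q)`, computed in `GF(q²)`, counts each of its conjugates twice.
-/

open Finset QuadraticMap

section ProductOfLinearForms

variable {M L : Type*} [CommRing L] [AddCommGroup M] [Module L M] (ℓ₁ ℓ₂ : Module.Dual L M)

theorem polar_mul_dual (x y : M) :
    polar (fun z => ℓ₁ z * ℓ₂ z) x y = ℓ₁ x * ℓ₂ y + ℓ₂ x * ℓ₁ y := by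
  simp only [polar, map_add]
  ring

variable [CharP L 2]

/-- A Plücker relation. -/
theorem polar_mul_dual_pfaffian (x₀ x₁ x₂ x₃ : M) :
    polar (fun z => ℓ₁ z * ℓ₂ z) x₀ x₁ * polar (fun z => ℓ₁ z * ℓ₂ z) x₂ x₃
      + polar (fun z => ℓ₁ z * ℓ₂ z) x₀ x₂ * polar (fun z => ℓ₁ z * ℓ₂ z) x₁ x₃
      + polar (fun z => ℓ₁ z * ℓ₂ z) x₀ x₃ * polar (fun z => ℓ₁ z * ℓ₂ z) x₁ x₂ = 0 := by
  simp only [polar_mul_dual]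
  ring_nf
  reduce_mod_char!

/-- If `v` is in the radical then `ℓ₁ v • ℓ₂ = ℓ₂ v • ℓ₁`, and this makes `ℓ₁ v` annihilate
the polar form. -/
theorem mul_eq_zero_of_polar_eq_zero [NoZeroDivisors L] {v w w' : M}
    (hv : ∀ x, polar (fun z => ℓ₁ z * ℓ₂ z) v x = 0)
    (hw : polar (fun z => ℓ₁ z * ℓ₂ z) w w' ≠ 0) : ℓ₁ v * ℓ₂ v = 0 := by
  simp only [polar_mul_dual] at hv hw
  suffices ℓ₁ v * (ℓ₁ w * ℓ₂ w' + ℓ₂ w * ℓ₁ w') = 0 by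
    simp [(mul_eq_zero.1 this).resolve_right hw]
  linear_combination (norm := (ring_nf; reduce_mod_char!)) ℓ₁ w * hv w' + ℓ₁ w' * hv w

end ProductOfLinearForms

section QuadricAtInfinity

variable {R S : Type*} [CommRing R] [CommRing S] (ν a₀ a₁ b₀ b₁ c₀ c₁ : R)

/-- `N(x₀ + ε x₁)`, where `ε² + ε + ν = 0`. -/
def normForm (x₀ x₁ : R) : R := x₀ ^ 2 + x₀ * x₁ + ν * x₁ ^ 2

/-- The form `f`, in the coordinates `(x₀, x₁, y₀, y₁)`. -/
def quadricAtInfinity (x : Fin 4 → R) : R :=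
  (a₁ + 1) * x 0 ^ 2 + x 0 * x 1 + (a₀ + (1 + ν) * a₁ + ν) * x 1 ^ 2
    + (b₁ + 1) * x 2 ^ 2 + x 2 * x 3 + (b₀ + (1 + ν) * b₁ + ν) * x 3 ^ 2
    + c₁ * x 0 * x 2 + (c₀ + c₁) * x 0 * x 3 + (c₀ + c₁) * x 1 * x 2
    + (c₀ + (1 + ν) * c₁) * x 1 * x 3

/- The Gram matrix of the polar form is `[[J, C], [Cᵀ, J]]` with `J = [[0, 1], [1, 0]]`; the
vectors `(J C e, e)` below lie in its radical once `det C = N(c)` equals `1`. -/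

def radicalVec₁ : Fin 4 → R := ![c₀ + c₁, c₁, 1, 0]

def radicalVec₂ : Fin 4 → R := ![c₀ + (1 + ν) * c₁, c₀ + c₁, 0, 1]

local notation "Ξ" => quadricAtInfinity ν a₀ a₁ b₀ b₁ c₀ c₁

def RadicalConditions : Prop :=
  normForm ν c₀ c₁ = 1 ∧ Ξ (radicalVec₁ c₀ c₁) = 0 ∧ Ξ (radicalVec₂ ν c₀ c₁) = 0

variable {ν a₀ a₁ b₀ b₁ c₀ c₁}

theorem map_normForm (φ : R →+* S) (x₀ x₁ : R) :
    φ (normForm ν x₀ x₁) = normForm (φ ν) (φ x₀) (φ x₁) := by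
  simp [normForm]

theorem map_quadricAtInfinity (φ : R →+* S) (x : Fin 4 → R) :
    φ (Ξ x) = quadricAtInfinity (φ ν) (φ a₀) (φ a₁) (φ b₀) (φ b₁) (φ c₀) (φ c₁) (φ ∘ x) := by
  simp [quadricAtInfinity]

theorem map_comp_radicalVec₁ (φ : R →+* S) :
    φ ∘ radicalVec₁ c₀ c₁ = radicalVec₁ (φ c₀) (φ c₁) := by
  ext i; fin_cases i <;> simp [radicalVec₁]

theorem map_comp_radicalVec₂ (φ : R →+* S) :
    φ ∘ radicalVec₂ ν c₀ c₁ = radicalVec₂ (φ ν) (φ c₀) (φ c₁) := by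
  ext i; fin_cases i <;> simp [radicalVec₂]

theorem radicalConditions_map_iff {φ : R →+* S} (hφ : Function.Injective φ) :
    RadicalConditions (φ ν) (φ a₀) (φ a₁) (φ b₀) (φ b₁) (φ c₀) (φ c₁)
      ↔ RadicalConditions ν a₀ a₁ b₀ b₁ c₀ c₁ := by
  simp only [RadicalConditions, ← map_normForm, ← map_comp_radicalVec₁, ← map_comp_radicalVec₂,
    ← map_quadricAtInfinity, ← map_one φ, ← map_zero φ, hφ.eq_iff]

theorem polar_quadricAtInfinity_single_zero_one :
    polar Ξ (Pi.single 0 1) (Pi.single 1 1) = 1 := by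
  simp only [polar, quadricAtInfinity, Pi.add_apply, Pi.single_apply, Fin.reduceEq, ↓reduceIte]
  ring

variable [CharP R 2]

theorem pfaffian_polar_quadricAtInfinity :
    polar Ξ (Pi.single 0 1) (Pi.single 1 1) * polar Ξ (Pi.single 2 1) (Pi.single 3 1)
      + polar Ξ (Pi.single 0 1) (Pi.single 2 1) * polar Ξ (Pi.single 1 1) (Pi.single 3 1)
      + polar Ξ (Pi.single 0 1) (Pi.single 3 1) * polar Ξ (Pi.single 1 1) (Pi.single 2 1)
      = 1 + normForm ν c₀ c₁ := by
  simp only [polar, quadricAtInfinity, normForm, Pi.add_apply, Pi.single_apply, Fin.reduceEq,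
    ↓reduceIte]
  ring_nf
  reduce_mod_char!

theorem polar_quadricAtInfinity_radicalVec₁ (x : Fin 4 → R) :
    polar Ξ (radicalVec₁ c₀ c₁) x = (1 + normForm ν c₀ c₁) * x 3 := by
  simp only [polar, quadricAtInfinity, radicalVec₁, normForm, Pi.add_apply, Matrix.cons_val]
  ring_nf
  reduce_mod_char!

theorem polar_quadricAtInfinity_radicalVec₂ (x : Fin 4 → R) :
    polar Ξ (radicalVec₂ ν c₀ c₁) x = (1 + normForm ν c₀ c₁) * x 2 := by
  simp only [polar, quadricAtInfinity, radicalVec₂, normForm, Pi.add_apply, Matrix.cons_val]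
  ring_nf
  reduce_mod_char!

theorem radicalConditions_of_eq_mul [IsDomain R] (ℓ₁ ℓ₂ : Module.Dual R (Fin 4 → R))
    (h : ∀ x, Ξ x = ℓ₁ x * ℓ₂ x) : RadicalConditions ν a₀ a₁ b₀ b₁ c₀ c₁ := by
  have hΞ : Ξ = fun x => ℓ₁ x * ℓ₂ x := funext h
  have hN : normForm ν c₀ c₁ = 1 := by
    have := polar_mul_dual_pfaffian ℓ₁ ℓ₂ (Pi.single 0 1) (Pi.single 1 1) (Pi.single 2 1)
      (Pi.single 3 1)
    rw [← hΞ, pfaffian_polar_quadricAtInfinity] at this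
    linear_combination (norm := (ring_nf; reduce_mod_char!)) this
  have hrad : ∀ v, (∀ x, polar Ξ v x = 0) → Ξ v = 0 := fun v hv => by
    rw [h]
    refine mul_eq_zero_of_polar_eq_zero ℓ₁ ℓ₂ (w := Pi.single 0 1) (w' := Pi.single 1 1)
      (by rwa [← hΞ]) ?_
    rw [← hΞ, polar_quadricAtInfinity_single_zero_one]
    exact one_ne_zero
  refine ⟨hN, hrad _ fun x => ?_, hrad _ fun x => ?_⟩
  · rw [polar_quadricAtInfinity_radicalVec₁, hN, CharTwo.add_self_eq_zero, zero_mul]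
  · rw [polar_quadricAtInfinity_radicalVec₂, hN, CharTwo.add_self_eq_zero, zero_mul]

/-- With `ā = a₀ + (ε + 1) a₁` the conjugate of `a = a₀ + ε a₁`, the radical conditions say
`b = ā c²`, whence `a b = a ā c² = N(a) c²`. -/
theorem mul_eq_normForm_mul_sq {ε : R} (hε : ε ^ 2 + ε + ν = 0)
    (h : RadicalConditions ν a₀ a₁ b₀ b₁ c₀ c₁) :
    (a₀ + ε * a₁) * (b₀ + ε * b₁) = normForm ν a₀ a₁ * (c₀ + ε * c₁) ^ 2 := by
  obtain ⟨hN, h₁, h₂⟩ := h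
  simp only [normForm] at hN
  simp only [quadricAtInfinity, radicalVec₁, radicalVec₂, Matrix.cons_val] at h₁ h₂
  have hb : b₀ + ε * b₁ = (a₀ + (ε + 1) * a₁) * (c₀ + ε * c₁) ^ 2 := by
    linear_combination (norm := (ring_nf; reduce_mod_char!))
      h₂ + (1 + ν + ε) * h₁ + (1 + ε) * hN + (a₀ + ε * a₁) * c₁ ^ 2 * hε
  have hnorm : (a₀ + ε * a₁) * (a₀ + (ε + 1) * a₁) = normForm ν a₀ a₁ := by
    unfold normForm
    linear_combination (norm := (ring_nf; reduce_mod_char!)) a₁ ^ 2 * hε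
  rw [hb, ← mul_assoc, hnorm]

end QuadricAtInfinity

theorem charP_two_of_card_eq_two_pow {K : Type*} [Field K] [Fintype K] {n : ℕ}
    (h : Fintype.card K = 2 ^ n) : CharP K 2 := by
  have h2 : (2 : K) ^ n = 0 := by exact_mod_cast h ▸ FiniteField.cast_card_eq_zero K
  exact CharTwo.of_one_ne_zero_of_two_eq_zero one_ne_zero (eq_zero_of_pow_eq_zero h2)

theorem sum_range_two_mul_pow_two_pow_eq_zero {R : Type*} [CommRing R] [CharP R 2] {t : R}
    {h : ℕ} (ht : t ^ 2 ^ h = t) : ∑ i ∈ range (2 * h), t ^ 2 ^ i = 0 := by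
  rw [two_mul, sum_range_add]
  simp only [pow_add, pow_mul, ht, CharTwo.add_self_eq_zero]

theorem stmt_10_general
    (h q : ℕ) (hq : q = 2 ^ h)
    (K F : Type) [Field K] [Fintype K] [Field F] [Algebra K F]
    (hK : Fintype.card K = q)
    (ν : K)
    (ε : F) (hε : ε ^ 2 + ε + algebraMap K F ν = 0)
    (a₀ a₁ b₀ b₁ c₀ c₁ : K)
    (hc : algebraMap K F c₀ + ε * algebraMap K F c₁ ≠ 0)
    (hfac : ∃ l m n r l' m' n' r' : AlgebraicClosure K,
      ∀ x₀ x₁ y₀ y₁ : AlgebraicClosure K,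
        algebraMap K (AlgebraicClosure K) (a₁ + 1) * x₀ ^ 2 + x₀ * x₁
          + algebraMap K (AlgebraicClosure K) (a₀ + (1 + ν) * a₁ + ν) * x₁ ^ 2
          + algebraMap K (AlgebraicClosure K) (b₁ + 1) * y₀ ^ 2 + y₀ * y₁
          + algebraMap K (AlgebraicClosure K) (b₀ + (1 + ν) * b₁ + ν) * y₁ ^ 2
          + algebraMap K (AlgebraicClosure K) c₁ * x₀ * y₀
          + algebraMap K (AlgebraicClosure K) (c₀ + c₁) * x₀ * y₁
          + algebraMap K (AlgebraicClosure K) (c₀ + c₁) * x₁ * y₀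
          + algebraMap K (AlgebraicClosure K) (c₀ + (1 + ν) * c₁) * x₁ * y₁
        = (l * x₀ + m * x₁ + n * y₀ + r * y₁)
            * (l' * x₀ + m' * x₁ + n' * y₀ + r' * y₁)) :
    ∑ i ∈ Finset.range (2 * h),
      ((algebraMap K F a₀ + ε * algebraMap K F a₁)
          * (algebraMap K F b₀ + ε * algebraMap K F b₁)
          / (algebraMap K F c₀ + ε * algebraMap K F c₁) ^ 2) ^ 2 ^ i = 0 := by
  have : CharP K 2 := charP_two_of_card_eq_two_pow (hK.trans hq)
  have : CharP F 2 := charP_of_injective_algebraMap (algebraMap K F).injective 2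
  obtain ⟨l, m, n, r, l', m', n', r', H⟩ := hfac
  set φ := algebraMap K (AlgebraicClosure K)
  have hsplit : ∀ x, quadricAtInfinity (φ ν) (φ a₀) (φ a₁) (φ b₀) (φ b₁) (φ c₀) (φ c₁) x
      = dotProductEquiv _ _ ![l, m, n, r] x * dotProductEquiv _ _ ![l', m', n', r'] x := by
    simp only [map_add, map_mul, map_one] at H
    intro x
    simpa [quadricAtInfinity, dotProduct, Fin.sum_univ_four] using H (x 0) (x 1) (x 2) (x 3)
  have hradK := (radicalConditions_map_iff φ.injective).1 (radicalConditions_of_eq_mul _ _ hsplit)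
  have hradF := (radicalConditions_map_iff (algebraMap K F).injective).2 hradK
  rw [mul_eq_normForm_mul_sq hε hradF, mul_div_cancel_right₀ _ (pow_ne_zero 2 hc), ← map_normForm]
  refine sum_range_two_mul_pow_two_pow_eq_zero ?_
  rw [← map_pow, ← hq, ← hK, FiniteField.pow_card]

/-- From the proof of Lemma 3.2: if the quadratic form `f` over `K = GF(q)`
describing the quadric at infinity `Ξ∞` splits into two linear factors over an
algebraic closure of `K` (i.e. `rank Ξ∞ = 2`), then the quadric
`z = ax² + by² + cxy + …` of `PG(3,q²)` is hyperbolic: `Tr(ab/c²) = 0`.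
Here `ν ∈ K` has absolute trace `1`, `ε ∈ F = GF(q²)` satisfies
`ε² + ε + ν = 0`, and `a = a₀ + εa₁`, `b = b₀ + εb₁`, `c = c₀ + εc₁`. -/
theorem stmt_10
    (h q : ℕ) (hh : 1 ≤ h) (hq : q = 2 ^ h)
    (K F : Type) [Field K] [Fintype K] [Field F] [Fintype F] [Algebra K F]
    (hK : Fintype.card K = q) (hF : Fintype.card F = q ^ 2)
    (ν : K) (hν : ∑ i ∈ Finset.range h, ν ^ 2 ^ i = 1)
    (ε : F) (hε : ε ^ 2 + ε + algebraMap K F ν = 0)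
    (a₀ a₁ b₀ b₁ c₀ c₁ : K)
    (hc : algebraMap K F c₀ + ε * algebraMap K F c₁ ≠ 0)
    (hfac : ∃ l m n r l' m' n' r' : AlgebraicClosure K,
      ∀ x₀ x₁ y₀ y₁ : AlgebraicClosure K,
        algebraMap K (AlgebraicClosure K) (a₁ + 1) * x₀ ^ 2 + x₀ * x₁
          + algebraMap K (AlgebraicClosure K) (a₀ + (1 + ν) * a₁ + ν) * x₁ ^ 2
          + algebraMap K (AlgebraicClosure K) (b₁ + 1) * y₀ ^ 2 + y₀ * y₁
          + algebraMap K (AlgebraicClosure K) (b₀ + (1 + ν) * b₁ + ν) * y₁ ^ 2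
          + algebraMap K (AlgebraicClosure K) c₁ * x₀ * y₀
          + algebraMap K (AlgebraicClosure K) (c₀ + c₁) * x₀ * y₁
          + algebraMap K (AlgebraicClosure K) (c₀ + c₁) * x₁ * y₀
          + algebraMap K (AlgebraicClosure K) (c₀ + (1 + ν) * c₁) * x₁ * y₁
        = (l * x₀ + m * x₁ + n * y₀ + r * y₁)
            * (l' * x₀ + m' * x₁ + n' * y₀ + r' * y₁)) :
    ∑ i ∈ Finset.range (2 * h),
      ((algebraMap K F a₀ + ε * algebraMap K F a₁)
          * (algebraMap K F b₀ + ε * algebraMap K F b₁)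
          / (algebraMap K F c₀ + ε * algebraMap K F c₁) ^ 2) ^ 2 ^ i = 0 :=
  stmt_10_general h q hq K F hK ν ε hε a₀ a₁ b₀ b₁ c₀ c₁ hc hfac
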